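/- Let d ∈ ℕ, Φ = (φ₀,…,φ_d) ∈ ℝ^{d+1} and s ∈ {0,1}^d, with d₁ the Hamming weight of s and d₂ = d − d₁, and assume d₁ ≥ 1 and d₂ ≥ 1. Let P and Q be the (1,1) and (1,2) entries of the M-QSP unitary M_{Φ,s}, and suppose c_{jk} and c̃_{jk} (j ∈ [−d₁,d₁], k ∈ [−d₂,d₂], complex) satisfy P(x₁,x₂) = Σ_{j,k} c_{jk} e^{ijx₁} e^{ikx₂} and Q(x₁,x₂) = Σ_{j,k} c̃_{jk} e^{ijx₁} e^{ikx₂} for all x₁, x₂ ∈ ℝ. Then at least one of the following holds: there exists φ ∈ ℝ such that c_{d₁,k} = e^{2iφ} c̃_{d₁,k} for every k ∈ [−d₂,d₂]; or there exists φ′ ∈ ℝ such that c_{j,d₂} = e^{2iφ′} c̃_{j,d₂} for every j ∈ [−d₁,d₁]. -/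

import Mathlib

open Complex Matrix
open scoped Matrix

noncomputable def Wgate (x : ℝ) : Matrix (Fin 2) (Fin 2) ℂ :=
  !![(Real.cos x : ℂ), (Real.sin x : ℂ) * Complex.I;
     (Real.sin x : ℂ) * Complex.I, (Real.cos x : ℂ)]

noncomputable def Zgate (φ : ℝ) : Matrix (Fin 2) (Fin 2) ℂ :=
  !![Complex.exp ((φ : ℂ) * Complex.I), 0;
     0, Complex.exp (-(φ : ℂ) * Complex.I)]

/-- The M-QSP unitary
`M_{Φ,s}(x₁,x₂) = Z(φ₀)·∏_{k=1}^d (W(x₁)^{s_k}·W(x₂)^{1-s_k}·Z(φ_k))`,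
where each `s k ∈ {0,1}`. -/
noncomputable def Mmqsp (d : ℕ) (Φ : Fin (d + 1) → ℝ) (s : Fin d → ℕ)
    (x₁ x₂ : ℝ) : Matrix (Fin 2) (Fin 2) ℂ :=
  Zgate (Φ 0) *
    (List.ofFn (fun k : Fin d =>
      Wgate x₁ ^ (s k) * Wgate x₂ ^ (1 - s k) * Zgate (Φ k.succ))).prod

/-!
Put `w = e^{2iφ_d}`, so that `P - w Q` is the first entry of `M_{Φ,s} (1, -w)ᵀ`. If the last
signal bit selects `x₁`, then `M_{Φ,s} = L W(x₁) Z(φ_d)` where `L` has `x₁`-degree `d₁ - 1`. Now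
`Z(φ_d)` maps `(1, -w)` to `e^{iφ_d} (1, -1)`, and `(1, -1)` is an eigenvector of `W(x₁)` with
eigenvalue `e^{-ix₁}`. So `P - w Q = e^{iφ_d} e^{-ix₁} (L₀₀ - L₀₁)` has no `e^{id₁x₁}` term. The
characters `x ↦ e^{ijx}` are linearly independent, so comparing coefficients twice (first in `x₁`,
then in `x₂`) gives `c_{d₁,k} = w c̃_{d₁,k}`. If the last bit selects `x₂`, swap the two variables
and flip `s`.
-/

open scoped Pointwise

lemma LinearIndependent.coeff_eq_zero_of_sum_mem_span_image {ι R M : Type*} [Ring R]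
    [AddCommGroup M] [Module R M] {v : ι → M} (hv : LinearIndependent R v) {s : Set ι}
    {t : Finset ι} {a : ι → R} (h : ∑ i ∈ t, a i • v i ∈ Submodule.span R (v '' s)) {i : ι}
    (hit : i ∈ t) (his : i ∉ s) : a i = 0 := by
  classical
  obtain ⟨l, hls, hl⟩ := (Finsupp.mem_span_image_iff_linearCombination R).mp h
  have hl_eq : l = ∑ i ∈ t, Finsupp.single i (a i) :=
    hv (by simp [hl, map_sum, Finsupp.linearCombination_single])
  have hli : l i = 0 := Finsupp.notMem_support_iff.mp fun hi => his (hls hi)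
  simpa [hli, Finsupp.finsetSum_apply, Finsupp.single_apply, hit] using
    (DFunLike.congr_fun hl_eq i).symm

noncomputable def expChar (j : ℤ) (x : ℝ) : ℂ := exp (I * j * x)

lemma expChar_add (j k : ℤ) (x : ℝ) : expChar (j + k) x = expChar j x * expChar k x := by
  simp only [expChar, ← Complex.exp_add]; push_cast; ring_nf

lemma expChar_zero : expChar 0 = 1 := by
  ext x; simp [expChar]

lemma expChar_injective : Function.Injective expChar := by
  intro j k h
  by_contra hjk
  set x : ℝ := Real.pi / (j - k : ℤ)
  have hne : (j : ℂ) - k ≠ 0 := by exact_mod_cast sub_ne_zero.mpr hjk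
  have half_turn : expChar (j - k) x = -1 := by
    rw [expChar, ← Complex.exp_pi_mul_I]; congr 1; push_cast [x]; field_simp
  have hx := congrFun h x
  rw [← sub_add_cancel j k, expChar_add, half_turn, neg_one_mul, _root_.neg_eq_self] at hx
  exact Complex.exp_ne_zero _ hx

noncomputable def expCharHom (j : ℤ) : Multiplicative ℝ →* ℂ where
  toFun x := expChar j x.toAdd
  map_one' := by simp [expChar]
  map_mul' x y := by simp only [expChar, toAdd_mul, ← Complex.exp_add]; push_cast; ring_nf

lemma linearIndependent_expChar : LinearIndependent ℂ expChar :=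
  (linearIndependent_monoidHom (Multiplicative ℝ) ℂ).comp expCharHom fun _ _ h =>
    expChar_injective (congrArg (fun f : Multiplicative ℝ →* ℂ => fun x : ℝ => f (.ofAdd x)) h)

def trigSpan (A : Set ℤ) : Submodule ℂ (ℝ → ℂ) := Submodule.span ℂ (expChar '' A)

lemma trigSpan_mono : Monotone trigSpan := fun _ _ h => Submodule.span_mono (Set.image_mono h)

lemma expChar_mem_trigSpan {j : ℤ} {A : Set ℤ} (hj : j ∈ A) : expChar j ∈ trigSpan A :=
  Submodule.subset_span (Set.mem_image_of_mem _ hj)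

lemma mul_mem_trigSpan {A B : Set ℤ} {f g : ℝ → ℂ} (hf : f ∈ trigSpan A) (hg : g ∈ trigSpan B) :
    f * g ∈ trigSpan (A + B) := by
  refine (?_ : trigSpan A * trigSpan B ≤ trigSpan (A + B)) (Submodule.mul_mem_mul hf hg)
  rw [trigSpan, trigSpan, Submodule.span_mul_span]
  refine Submodule.span_mono ?_
  rintro _ ⟨_, ⟨j, hj, rfl⟩, _, ⟨k, hk, rfl⟩, rfl⟩
  exact ⟨j + k, Set.add_mem_add hj hk, funext (expChar_add j k)⟩

abbrev trigPoly (m : ℕ) : Submodule ℂ (ℝ → ℂ) := trigSpan (Set.Icc (-(m : ℤ)) m)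

lemma mul_mem_trigPoly {m n : ℕ} {f g : ℝ → ℂ} (hf : f ∈ trigPoly m) (hg : g ∈ trigPoly n) :
    f * g ∈ trigPoly (m + n) := by
  refine trigSpan_mono ?_ (mul_mem_trigSpan hf hg)
  refine (Set.Icc_add_Icc_subset _ _ _ _).trans (Set.Icc_subset_Icc (by omega) (by omega))

lemma const_mem_trigPoly (z : ℂ) (m : ℕ) : (fun _ => z) ∈ trigPoly m := by
  have h : (fun _ : ℝ => z) = z • expChar 0 := by ext; simp [expChar]
  rw [h]
  exact Submodule.smul_mem _ z (expChar_mem_trigSpan (by simp))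

lemma cos_mem_trigPoly_one : (fun x : ℝ => (Real.cos x : ℂ)) ∈ trigPoly 1 := by
  have h : (fun x : ℝ => (Real.cos x : ℂ)) = (2⁻¹ : ℂ) • (expChar 1 + expChar (-1)) := by
    ext x; simp [expChar, Complex.cos]; ring_nf
  rw [h]
  exact Submodule.smul_mem _ _ (add_mem (expChar_mem_trigSpan (by simp))
    (expChar_mem_trigSpan (by simp)))

lemma sin_mul_I_mem_trigPoly_one : (fun x : ℝ => (Real.sin x : ℂ) * I) ∈ trigPoly 1 := by
  have h : (fun x : ℝ => (Real.sin x : ℂ) * I) = (2⁻¹ : ℂ) • (expChar 1 - expChar (-1)) := by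
    ext x; simp [expChar, Complex.sin]; ring_nf; rw [I_sq]; ring
  rw [h]
  exact Submodule.smul_mem _ _ (sub_mem (expChar_mem_trigSpan (by simp))
    (expChar_mem_trigSpan (by simp)))

section TrigPolyMatrix

variable {ι : Type*}

def IsTrigPolyMatrix (m : ℕ) (A : ℝ → Matrix ι ι ℂ) : Prop :=
  ∀ i j, (fun x => A x i j) ∈ trigPoly m

lemma isTrigPolyMatrix_const (A : Matrix ι ι ℂ) : IsTrigPolyMatrix 0 fun _ => A :=
  fun i j => const_mem_trigPoly (A i j) 0

lemma IsTrigPolyMatrix.mul [Fintype ι] {m n : ℕ} {A B : ℝ → Matrix ι ι ℂ}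
    (hA : IsTrigPolyMatrix m A) (hB : IsTrigPolyMatrix n B) :
    IsTrigPolyMatrix (m + n) fun x => A x * B x := by
  intro i j
  have h : (fun x => (A x * B x) i j) = ∑ k, (fun x => A x i k) * fun x => B x k j := by
    ext x; simp [Matrix.mul_apply]
  rw [h]
  exact Submodule.sum_mem _ fun k _ => mul_mem_trigPoly (hA i k) (hB k j)

lemma IsTrigPolyMatrix.pow [Fintype ι] [DecidableEq ι] {m : ℕ} {A : ℝ → Matrix ι ι ℂ}
    (hA : IsTrigPolyMatrix m A) (n : ℕ) :
    IsTrigPolyMatrix (m * n) fun x => A x ^ n := by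
  induction n with
  | zero => simpa using isTrigPolyMatrix_const (1 : Matrix ι ι ℂ)
  | succ n ih => simpa [pow_succ, mul_add] using ih.mul hA

lemma isTrigPolyMatrix_list_ofFn_prod [Fintype ι] [DecidableEq ι] {n : ℕ}
    {A : Fin n → ℝ → Matrix ι ι ℂ} {m : Fin n → ℕ} (hA : ∀ k, IsTrigPolyMatrix (m k) (A k)) :
    IsTrigPolyMatrix (∑ k, m k) fun x => (List.ofFn fun k => A k x).prod := by
  induction n with
  | zero => simpa using isTrigPolyMatrix_const (1 : Matrix ι ι ℂ)
  | succ n ih =>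
    simpa [List.ofFn_succ, Fin.sum_univ_succ] using (hA 0).mul (ih fun k => hA k.succ)

end TrigPolyMatrix

lemma isTrigPolyMatrix_Wgate : IsTrigPolyMatrix 1 Wgate := by
  intro i j
  fin_cases i <;> fin_cases j
  · exact cos_mem_trigPoly_one
  · exact sin_mul_I_mem_trigPoly_one
  · exact sin_mul_I_mem_trigPoly_one
  · exact cos_mem_trigPoly_one

lemma isTrigPolyMatrix_Mmqsp (d : ℕ) (Φ : Fin (d + 1) → ℝ) (s : Fin d → ℕ) (x₂ : ℝ) :
    IsTrigPolyMatrix (∑ k, s k) fun x₁ => Mmqsp d Φ s x₁ x₂ := by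
  have hstep : ∀ k, IsTrigPolyMatrix (s k) fun x₁ =>
      Wgate x₁ ^ s k * Wgate x₂ ^ (1 - s k) * Zgate (Φ k.succ) := fun k => by
    simpa using ((isTrigPolyMatrix_Wgate.pow (s k)).mul
      (isTrigPolyMatrix_const (Wgate x₂ ^ (1 - s k)))).mul (isTrigPolyMatrix_const _)
  simpa [Mmqsp] using
    (isTrigPolyMatrix_const (Zgate (Φ 0))).mul (isTrigPolyMatrix_list_ofFn_prod hstep)

lemma expChar_neg_one (x : ℝ) : expChar (-1) x = Real.cos x - Real.sin x * I := by
  rw [expChar, show I * ((-1 : ℤ) : ℂ) * x = (-x : ℝ) * I by push_cast; ring, Complex.exp_mul_I]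
  simp [sub_eq_add_neg]

lemma Wgate_mulVec_one_neg_one (x : ℝ) : Wgate x *ᵥ ![1, -1] = expChar (-1) x • ![1, -1] := by
  ext i
  fin_cases i <;> simp [Wgate, expChar_neg_one, Matrix.mulVec, dotProduct] <;> ring

lemma Zgate_mulVec (φ : ℝ) :
    Zgate φ *ᵥ ![1, -exp (2 * φ * I)] = exp (φ * I) • ![1, -1] := by
  ext i
  fin_cases i
  · simp [Zgate, Matrix.mulVec, dotProduct]
  · simp [Zgate, Matrix.mulVec, dotProduct, ← Complex.exp_add]; ring_nf

lemma Mmqsp_succ {n : ℕ} (Φ : Fin (n + 2) → ℝ) (s : Fin (n + 1) → ℕ) (x₁ x₂ : ℝ) :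
    Mmqsp (n + 1) Φ s x₁ x₂ =
      Mmqsp n (fun k => Φ k.castSucc) (fun k => s k.castSucc) x₁ x₂ *
        (Wgate x₁ ^ s (Fin.last n) * Wgate x₂ ^ (1 - s (Fin.last n)) *
          Zgate (Φ (Fin.last (n + 1)))) := by
  simp only [Mmqsp, List.ofFn_succ', List.prod_concat, Fin.succ_castSucc, Fin.castSucc_zero,
    Fin.succ_last, mul_assoc]

lemma Mmqsp_sub_phase_mul_mem_trigSpan_Iio {n : ℕ} (Φ : Fin (n + 2) → ℝ) (s : Fin (n + 1) → ℕ)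
    (hlast : s (Fin.last n) = 1) (x₂ : ℝ) :
    (fun x₁ => Mmqsp (n + 1) Φ s x₁ x₂ 0 0 -
        exp (2 * Φ (Fin.last (n + 1)) * I) * Mmqsp (n + 1) Φ s x₁ x₂ 0 1) ∈
      trigSpan (Set.Iio (∑ k, s k : ℕ)) := by
  set φ := Φ (Fin.last (n + 1))
  set L := fun x₁ => Mmqsp n (fun k => Φ k.castSucc) (fun k => s k.castSucc) x₁ x₂
  have hM : ∀ x₁, Mmqsp (n + 1) Φ s x₁ x₂ 0 0 - exp (2 * φ * I) * Mmqsp (n + 1) Φ s x₁ x₂ 0 1 =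
      exp (φ * I) * (expChar (-1) x₁ * (L x₁ 0 0 - L x₁ 0 1)) := fun x₁ => by
    calc _ = (Mmqsp (n + 1) Φ s x₁ x₂ *ᵥ ![1, -exp (2 * φ * I)]) 0 := by
          simp [Matrix.mulVec, dotProduct]; ring
      _ = (L x₁ *ᵥ (Wgate x₁ *ᵥ (Zgate φ *ᵥ ![1, -exp (2 * φ * I)]))) 0 := by
          rw [Mmqsp_succ, hlast, pow_one, Nat.sub_self, pow_zero, mul_one,
            ← Matrix.mulVec_mulVec, ← Matrix.mulVec_mulVec]
      _ = exp (φ * I) * (expChar (-1) x₁ * (L x₁ *ᵥ ![1, -1]) 0) := by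
          rw [Zgate_mulVec, Matrix.mulVec_smul, Wgate_mulVec_one_neg_one, Matrix.mulVec_smul,
            Matrix.mulVec_smul]
          rfl
      _ = _ := by simp [Matrix.mulVec, dotProduct, sub_eq_add_neg]
  obtain ⟨m, hm, hsum⟩ : ∃ m, m = ∑ k : Fin n, s k.castSucc ∧ ∑ k, s k = m + 1 :=
    ⟨_, rfl, by simp [Fin.sum_univ_castSucc, hlast]⟩
  have hL : (fun x₁ => L x₁ 0 0 - L x₁ 0 1) ∈ trigPoly m := by
    subst hm
    exact sub_mem (isTrigPolyMatrix_Mmqsp n _ _ x₂ 0 0) (isTrigPolyMatrix_Mmqsp n _ _ x₂ 0 1)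
  have hprod := mul_mem_trigSpan (expChar_mem_trigSpan (Set.mem_singleton (-1 : ℤ))) hL
  rw [funext hM]
  refine Submodule.smul_mem _ (exp (φ * I)) (trigSpan_mono ?_ hprod)
  rintro _ ⟨_, rfl, j, hj, rfl⟩
  simp only [Set.mem_Icc, Set.mem_Iio, hsum] at hj ⊢
  push_cast
  omega

lemma Mmqsp_topCoeff_eq_of_last_eq_one {n : ℕ} (Φ : Fin (n + 2) → ℝ) (s : Fin (n + 1) → ℕ)
    (hlast : s (Fin.last n) = 1) {J K : Finset ℤ} (hJ : ((∑ k, s k : ℕ) : ℤ) ∈ J)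
    (c ctil : ℤ → ℤ → ℂ)
    (hP : ∀ x₁ x₂, Mmqsp (n + 1) Φ s x₁ x₂ 0 0 =
      ∑ j ∈ J, ∑ k ∈ K, c j k * expChar j x₁ * expChar k x₂)
    (hQ : ∀ x₁ x₂, Mmqsp (n + 1) Φ s x₁ x₂ 0 1 =
      ∑ j ∈ J, ∑ k ∈ K, ctil j k * expChar j x₁ * expChar k x₂) :
    ∀ k ∈ K, c (∑ k, s k : ℕ) k =
      exp (2 * Φ (Fin.last (n + 1)) * I) * ctil (∑ k, s k : ℕ) k := by
  set w := exp (2 * Φ (Fin.last (n + 1)) * I)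
  set D : ℤ := ((∑ k, s k : ℕ) : ℤ)
  let a (x₂ : ℝ) (j : ℤ) : ℂ := ∑ k ∈ K, (c j k - w * ctil j k) * expChar k x₂
  have hexpand : ∀ x₂,
      (fun x₁ => Mmqsp (n + 1) Φ s x₁ x₂ 0 0 - w * Mmqsp (n + 1) Φ s x₁ x₂ 0 1) =
        ∑ j ∈ J, a x₂ j • expChar j := fun x₂ => by
    ext x₁
    simp only [hP, hQ, a, Finset.sum_apply, Pi.smul_apply, smul_eq_mul, Finset.mul_sum,
      Finset.sum_mul, ← Finset.sum_sub_distrib]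
    exact Finset.sum_congr rfl fun j _ => Finset.sum_congr rfl fun k _ => by ring
  have htop : ∀ x₂, a x₂ D = 0 := fun x₂ => by
    have hmem := Mmqsp_sub_phase_mul_mem_trigSpan_Iio Φ s hlast x₂
    rw [hexpand] at hmem
    exact linearIndependent_expChar.coeff_eq_zero_of_sum_mem_span_image hmem hJ (lt_irrefl D)
  intro k hk
  refine sub_eq_zero.mp (linearIndependent_iff'.mp linearIndependent_expChar K
    (fun k => c D k - w * ctil D k) ?_ k hk)
  ext x₂
  simpa [Finset.sum_apply] using htop x₂

lemma Mmqsp_swap {d : ℕ} (Φ : Fin (d + 1) → ℝ) {s : Fin d → ℕ} (hs : ∀ k, s k ≤ 1) (x₁ x₂ : ℝ) :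
    Mmqsp d Φ (fun k => 1 - s k) x₂ x₁ = Mmqsp d Φ s x₁ x₂ := by
  have hstep : ∀ k, Wgate x₂ ^ (1 - s k) * Wgate x₁ ^ (1 - (1 - s k)) =
      Wgate x₁ ^ s k * Wgate x₂ ^ (1 - s k) := fun k => by
    rcases Nat.le_one_iff_eq_zero_or_eq_one.mp (hs k) with h | h <;> simp [h]
  simp only [Mmqsp, hstep]

lemma sum_one_sub_eq {d : ℕ} {s : Fin d → ℕ} (hs : ∀ k, s k ≤ 1) :
    ∑ k, (1 - s k) = d - ∑ k, s k := by
  have h : ∑ k, (1 - s k) + ∑ k, s k = d := by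
    simp [← Finset.sum_add_distrib, Nat.sub_add_cancel (hs _)]
  omega

lemma sum_sum_expChar_comm (J K : Finset ℤ) (c : ℤ → ℤ → ℂ) (x₁ x₂ : ℝ) :
    ∑ j ∈ J, ∑ k ∈ K, c j k * expChar j x₁ * expChar k x₂ =
      ∑ k ∈ K, ∑ j ∈ J, c j k * expChar k x₂ * expChar j x₁ := by
  rw [Finset.sum_comm]
  simp only [mul_right_comm]

theorem mqsp_top_coefficient_condition_general (d : ℕ) (Φ : Fin (d + 1) → ℝ)
    (s : Fin d → ℕ) (hs : ∀ k, s k ≤ 1)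
    (d₁ d₂ : ℕ) (hd₁ : d₁ = ∑ k, s k) (hd₂ : d₂ = d - d₁)
    (hd₂pos : 1 ≤ d₂)
    (c ctil : ℤ → ℤ → ℂ)
    (hP : ∀ x₁ x₂ : ℝ,
      Mmqsp d Φ s x₁ x₂ 0 0 =
        ∑ j ∈ Finset.Icc (-(d₁ : ℤ)) (d₁ : ℤ),
          ∑ k ∈ Finset.Icc (-(d₂ : ℤ)) (d₂ : ℤ),
            c j k * Complex.exp (Complex.I * (j : ℂ) * (x₁ : ℂ)) *
              Complex.exp (Complex.I * (k : ℂ) * (x₂ : ℂ)))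
    (hQ : ∀ x₁ x₂ : ℝ,
      Mmqsp d Φ s x₁ x₂ 0 1 =
        ∑ j ∈ Finset.Icc (-(d₁ : ℤ)) (d₁ : ℤ),
          ∑ k ∈ Finset.Icc (-(d₂ : ℤ)) (d₂ : ℤ),
            ctil j k * Complex.exp (Complex.I * (j : ℂ) * (x₁ : ℂ)) *
              Complex.exp (Complex.I * (k : ℂ) * (x₂ : ℂ))) :
    (∃ φ : ℝ, ∀ k ∈ Finset.Icc (-(d₂ : ℤ)) (d₂ : ℤ),
        c (d₁ : ℤ) k = Complex.exp (2 * (φ : ℂ) * Complex.I) * ctil (d₁ : ℤ) k) ∨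
    (∃ φ' : ℝ, ∀ j ∈ Finset.Icc (-(d₁ : ℤ)) (d₁ : ℤ),
        c j (d₂ : ℤ) = Complex.exp (2 * (φ' : ℂ) * Complex.I) * ctil j (d₂ : ℤ)) := by
  obtain ⟨n, rfl⟩ : ∃ n, d = n + 1 := ⟨d - 1, by omega⟩
  subst hd₁
  rcases Nat.le_one_iff_eq_zero_or_eq_one.mp (hs (Fin.last n)) with hlast | hlast
  · right
    obtain rfl : d₂ = ∑ k, (1 - s k) := hd₂.trans (sum_one_sub_eq hs).symm
    have hP' : ∀ y₁ y₂, Mmqsp (n + 1) Φ (fun k => 1 - s k) y₁ y₂ 0 0 =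
        ∑ k ∈ _, ∑ j ∈ _, c j k * expChar k y₁ * expChar j y₂ := fun y₁ y₂ => by
      rw [Mmqsp_swap Φ hs]
      exact (hP y₂ y₁).trans (sum_sum_expChar_comm _ _ c y₂ y₁)
    have hQ' : ∀ y₁ y₂, Mmqsp (n + 1) Φ (fun k => 1 - s k) y₁ y₂ 0 1 =
        ∑ k ∈ _, ∑ j ∈ _, ctil j k * expChar k y₁ * expChar j y₂ := fun y₁ y₂ => by
      rw [Mmqsp_swap Φ hs]
      exact (hQ y₂ y₁).trans (sum_sum_expChar_comm _ _ ctil y₂ y₁)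
    exact ⟨_, Mmqsp_topCoeff_eq_of_last_eq_one Φ _ (by simp [hlast]) (by rw [Finset.mem_Icc]; omega)
      (fun k j => c j k) (fun k j => ctil j k) hP' hQ'⟩
  · left
    exact ⟨_, Mmqsp_topCoeff_eq_of_last_eq_one Φ s hlast (by rw [Finset.mem_Icc]; omega)
      c ctil hP hQ⟩

theorem mqsp_top_coefficient_condition (d : ℕ) (Φ : Fin (d + 1) → ℝ)
    (s : Fin d → ℕ) (hs : ∀ k, s k ≤ 1)
    (d₁ d₂ : ℕ) (hd₁ : d₁ = ∑ k, s k) (hd₂ : d₂ = d - d₁)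
    (hd₁pos : 1 ≤ d₁) (hd₂pos : 1 ≤ d₂)
    (c ctil : ℤ → ℤ → ℂ)
    (hP : ∀ x₁ x₂ : ℝ,
      Mmqsp d Φ s x₁ x₂ 0 0 =
        ∑ j ∈ Finset.Icc (-(d₁ : ℤ)) (d₁ : ℤ),
          ∑ k ∈ Finset.Icc (-(d₂ : ℤ)) (d₂ : ℤ),
            c j k * Complex.exp (Complex.I * (j : ℂ) * (x₁ : ℂ)) *
              Complex.exp (Complex.I * (k : ℂ) * (x₂ : ℂ)))
    (hQ : ∀ x₁ x₂ : ℝ,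
      Mmqsp d Φ s x₁ x₂ 0 1 =
        ∑ j ∈ Finset.Icc (-(d₁ : ℤ)) (d₁ : ℤ),
          ∑ k ∈ Finset.Icc (-(d₂ : ℤ)) (d₂ : ℤ),
            ctil j k * Complex.exp (Complex.I * (j : ℂ) * (x₁ : ℂ)) *
              Complex.exp (Complex.I * (k : ℂ) * (x₂ : ℂ))) :
    (∃ φ : ℝ, ∀ k ∈ Finset.Icc (-(d₂ : ℤ)) (d₂ : ℤ),
        c (d₁ : ℤ) k = Complex.exp (2 * (φ : ℂ) * Complex.I) * ctil (d₁ : ℤ) k) ∨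
    (∃ φ' : ℝ, ∀ j ∈ Finset.Icc (-(d₁ : ℤ)) (d₁ : ℤ),
        c j (d₂ : ℤ) = Complex.exp (2 * (φ' : ℂ) * Complex.I) * ctil j (d₂ : ℤ)) :=
  mqsp_top_coefficient_condition_general d Φ s hs d₁ d₂ hd₁ hd₂ hd₂pos c ctil hP hQ
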